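/- Let M > 0 and let G be a probability measure supported in [−M, M]. Define m_k(z) := ∫ μ^k φ(z − μ) dG(μ) for k = 0, 1, 2, so that δ_G(z) = m₁(z)/m₀(z). Then for every z ∈ ℝ the function δ_G is differentiable at z with derivative δ'_G(z) = (m₂(z) m₀(z) − m₁(z)²) / m₀(z)², which equals the posterior variance Var_G(μ | Z = z) and is nonnegative; moreover, if G is not a Dirac point mass then δ'_G(z) > 0 for every z, so δ_G is strictly increasing. -/

import Mathlib

open MeasureTheory Real
open scoped ENNReal BigOperators

/-- The standard normal density `φ(x) = (2π)^{-1/2} exp(-x²/2)`. -/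
noncomputable def phi (x : ℝ) : ℝ := (Real.sqrt (2 * Real.pi))⁻¹ * Real.exp (-(x ^ 2) / 2)

/-- The Gaussian mixture density `f_G(z) = ∫ φ(z-μ) dG(μ)`. -/
noncomputable def mixDens (G : Measure ℝ) (z : ℝ) : ℝ := ∫ μ, phi (z - μ) ∂G

/-- `m_k(z) = ∫ μ^k φ(z-μ) dG(μ)`. -/
noncomputable def mmt (G : Measure ℝ) (k : ℕ) (z : ℝ) : ℝ := ∫ μ, μ ^ k * phi (z - μ) ∂G

/-- The posterior-mean Bayes rule `δ_G(z) = m₁(z)/m₀(z)`. -/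
noncomputable def bayesRule (G : Measure ℝ) (z : ℝ) : ℝ := mmt G 1 z / mmt G 0 z

/-- The posterior distribution of `μ` given `Z = z`: the measure with density
`μ ↦ φ(z-μ)/f_G(z)` with respect to `G`. -/
noncomputable def posterior (G : Measure ℝ) (z : ℝ) : Measure ℝ :=
  G.withDensity fun μ => ENNReal.ofReal (phi (z - μ) / mixDens G z)

lemma phi_pos (x : ℝ) : 0 < phi x := by
  have h : 0 < Real.sqrt (2 * Real.pi) :=
    Real.sqrt_pos.2 (by positivity)
  exact mul_pos (inv_pos.2 h) (Real.exp_pos _)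

lemma phi_le (x : ℝ) : phi x ≤ (Real.sqrt (2 * Real.pi))⁻¹ := by
  have h : 0 < Real.sqrt (2 * Real.pi) := Real.sqrt_pos.2 (by positivity)
  have : Real.exp (-(x ^ 2) / 2) ≤ 1 := by
    rw [Real.exp_le_one_iff]
    nlinarith [sq_nonneg x]
  calc phi x = (Real.sqrt (2 * Real.pi))⁻¹ * Real.exp (-(x ^ 2) / 2) := rfl
    _ ≤ (Real.sqrt (2 * Real.pi))⁻¹ * 1 := by
        exact mul_le_mul_of_nonneg_left this (le_of_lt (inv_pos.2 h))
    _ = (Real.sqrt (2 * Real.pi))⁻¹ := mul_one _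

lemma phi_continuous : Continuous phi := by
  unfold phi
  continuity

lemma phi_hasDerivAt (x : ℝ) : HasDerivAt phi (-x * phi x) x := by
  have h1 : HasDerivAt (fun y : ℝ => -(y ^ 2) / 2) (-x) x := by
    have : HasDerivAt (fun y : ℝ => y ^ 2) (2 * x) x := by
      simpa using (hasDerivAt_pow 2 x)
    have := (this.neg).div_const 2
    exact this.congr_deriv (by ring)
  have h2 : HasDerivAt (fun y : ℝ => Real.exp (-(y ^ 2) / 2))
      (Real.exp (-(x ^ 2) / 2) * (-x)) x := h1.exp
  have h3 := h2.const_mul ((Real.sqrt (2 * Real.pi))⁻¹)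
  have hphi : phi = fun y => (Real.sqrt (2 * Real.pi))⁻¹ * Real.exp (-(y ^ 2) / 2) := rfl
  rw [hphi]
  exact h3.congr_deriv (by show _ = -x * ((√(2 * π))⁻¹ * rexp (-x ^ 2 / 2)); ring)

/-- For a mixing distribution `G` supported in `[-M,M]`, the Bayes rule `δ_G` is everywhere
differentiable with derivative `(m₂ m₀ - m₁²)/m₀²`, which equals the posterior variance and is
nonnegative; if `G` is not a Dirac point mass, the derivative is everywhere positive and `δ_G`
is strictly increasing. -/
theorem bayes_rule_deriv_is_posterior_variance (M : ℝ) (hM : 0 < M)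
    (G : Measure ℝ) (hGp : IsProbabilityMeasure G) (hG : G (Set.Icc (-M) M)ᶜ = 0) :
    (∀ z : ℝ,
        HasDerivAt (bayesRule G)
          ((mmt G 2 z * mmt G 0 z - (mmt G 1 z) ^ 2) / (mmt G 0 z) ^ 2) z ∧
        (mmt G 2 z * mmt G 0 z - (mmt G 1 z) ^ 2) / (mmt G 0 z) ^ 2 =
          ProbabilityTheory.variance id (posterior G z) ∧
        0 ≤ (mmt G 2 z * mmt G 0 z - (mmt G 1 z) ^ 2) / (mmt G 0 z) ^ 2) ∧
      ((¬ ∃ c : ℝ, G = Measure.dirac c) →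
        (∀ z : ℝ, 0 < (mmt G 2 z * mmt G 0 z - (mmt G 1 z) ^ 2) / (mmt G 0 z) ^ 2) ∧
          StrictMono (bayesRule G)) := by
  set C : ℝ := (Real.sqrt (2 * Real.pi))⁻¹ with hC
  have hCpos : 0 < C := inv_pos.2 (Real.sqrt_pos.2 (by positivity))
  -- a.e. support
  have hae : ∀ᵐ μ ∂G, μ ∈ Set.Icc (-M) M := by
    rw [ae_iff]
    convert hG using 2
    ext; simp
  -- measurability of integrands
  have hmeas : ∀ (k : ℕ) (z : ℝ),
      AEStronglyMeasurable (fun μ : ℝ => μ ^ k * phi (z - μ)) G := by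
    intro k z
    exact ((continuous_pow k).mul
      (phi_continuous.comp (continuous_const.sub continuous_id))).aestronglyMeasurable
  -- integrability of integrands
  have hint : ∀ (k : ℕ) (z : ℝ), Integrable (fun μ : ℝ => μ ^ k * phi (z - μ)) G := by
    intro k z
    refine Integrable.mono' (integrable_const (M ^ k * C)) (hmeas k z) ?_
    filter_upwards [hae] with μ hμ
    have habs : |μ| ≤ M := abs_le.2 ⟨hμ.1, hμ.2⟩
    have h1 : 0 < phi (z - μ) := phi_pos _
    rw [norm_mul, norm_pow, Real.norm_eq_abs, Real.norm_eq_abs,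
      abs_of_pos h1]
    have h2 : |μ| ^ k ≤ M ^ k := pow_le_pow_left₀ (abs_nonneg μ) habs k
    exact mul_le_mul h2 (phi_le _) (le_of_lt h1) (by positivity)
  -- derivatives of the moments
  have hderiv : ∀ (k : ℕ) (z : ℝ),
      HasDerivAt (mmt G k) (mmt G (k + 1) z - z * mmt G k z) z := by
    intro k z₀
    have key := hasDerivAt_integral_of_dominated_loc_of_deriv_le
      (F := fun z (μ : ℝ) => μ ^ k * phi (z - μ))
      (F' := fun z (μ : ℝ) => μ ^ k * (-(z - μ) * phi (z - μ)))
      (x₀ := z₀) (bound := fun _ => M ^ k * ((|z₀| + 1 + M) * C))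
      (μ := G) (Metric.ball_mem_nhds z₀ one_pos)
      (Filter.Eventually.of_forall fun z => hmeas k z)
      (hint k z₀)
      (by
        exact ((continuous_pow k).mul
          (((continuous_const.sub continuous_id).neg.mul
            (phi_continuous.comp (continuous_const.sub continuous_id)))
            )).aestronglyMeasurable)
      (by
        filter_upwards [hae] with μ hμ
        intro z hz
        have habs : |μ| ≤ M := abs_le.2 ⟨hμ.1, hμ.2⟩
        have hzb : |z| ≤ |z₀| + 1 := by
          have := mem_ball_iff_norm.1 hz
          have h' : |z - z₀| ≤ 1 := le_of_lt this
          calc |z| = |z₀ + (z - z₀)| := by ring_nf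
            _ ≤ |z₀| + |z - z₀| := abs_add_le _ _
            _ ≤ |z₀| + 1 := by linarith
        have h1 : 0 < phi (z - μ) := phi_pos _
        rw [norm_mul, norm_pow, Real.norm_eq_abs, Real.norm_eq_abs, abs_mul,
          abs_neg, abs_of_pos h1]
        have h2 : |μ| ^ k ≤ M ^ k := pow_le_pow_left₀ (abs_nonneg μ) habs k
        have h3 : |z - μ| ≤ |z₀| + 1 + M := by
          calc |z - μ| ≤ |z| + |μ| := abs_sub _ _
            _ ≤ (|z₀| + 1) + M := add_le_add hzb habs
        have h4 : |z - μ| * phi (z - μ) ≤ (|z₀| + 1 + M) * C := by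
          have hnn : (0:ℝ) ≤ |z₀| + 1 + M := by positivity
          exact mul_le_mul h3 (phi_le _) (le_of_lt h1) hnn
        exact mul_le_mul h2 h4 (mul_nonneg (abs_nonneg _) (le_of_lt h1)) (by positivity))
      (integrable_const _)
      (by
        refine Filter.Eventually.of_forall fun μ => fun z _ => ?_
        have h1 : HasDerivAt (fun z : ℝ => z - μ) 1 z := by
          simpa using (hasDerivAt_id z).sub_const μ
        have h2 : HasDerivAt (fun z : ℝ => phi (z - μ))
            (-(z - μ) * phi (z - μ) * 1) z := (phi_hasDerivAt (z - μ)).comp (h₂ := phi) (h := fun z : ℝ => z - μ) z h1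
        have h3 := h2.const_mul (μ ^ k)
        exact h3.congr_deriv (by ring))
    have heq : (∫ μ : ℝ, μ ^ k * (-(z₀ - μ) * phi (z₀ - μ)) ∂G)
        = mmt G (k + 1) z₀ - z₀ * mmt G k z₀ := by
      have : (fun μ : ℝ => μ ^ k * (-(z₀ - μ) * phi (z₀ - μ)))
          = fun μ : ℝ => μ ^ (k + 1) * phi (z₀ - μ) - z₀ * (μ ^ k * phi (z₀ - μ)) := by
        funext μ; ring
      rw [this, integral_sub (hint (k + 1) z₀) ((hint k z₀).const_mul z₀),
        integral_const_mul]
      rfl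
    have := key.2
    rw [heq] at this
    exact this
  -- positivity of m₀
  have h0pos : ∀ z : ℝ, 0 < mmt G 0 z := by
    intro z
    have hnn : ∀ μ : ℝ, (0:ℝ) ≤ μ ^ 0 * phi (z - μ) := by
      intro μ; simp [le_of_lt (phi_pos (z - μ))]
    rw [mmt, integral_pos_iff_support_of_nonneg_ae (Filter.Eventually.of_forall hnn)
      (hint 0 z)]
    have hsupp : Function.support (fun μ : ℝ => μ ^ 0 * phi (z - μ)) = Set.univ := by
      ext μ; simp [Function.support, ne_of_gt (phi_pos (z - μ))]
    rw [hsupp]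
    simp [hGp.measure_univ]
  -- derivative of the Bayes rule
  have hbayes : ∀ z : ℝ, HasDerivAt (bayesRule G)
      ((mmt G 2 z * mmt G 0 z - (mmt G 1 z) ^ 2) / (mmt G 0 z) ^ 2) z := by
    intro z
    have h := (hderiv 1 z).div (hderiv 0 z) (ne_of_gt (h0pos z))
    have : bayesRule G = fun z => mmt G 1 z / mmt G 0 z := rfl
    rw [this]
    have hm0 : (mmt G 0 z) ≠ 0 := ne_of_gt (h0pos z)
    exact h.congr_deriv (by rw [div_left_inj' (pow_ne_zero 2 hm0)]; ring)
  -- mixDens = m₀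
  have hmix : ∀ z, mixDens G z = mmt G 0 z := by
    intro z; unfold mixDens mmt; simp
  -- key integral identity against the posterior
  have hpostint : ∀ (z : ℝ) (h : ℝ → ℝ),
      ∫ x, h x ∂(posterior G z) = ∫ μ, (phi (z - μ) / mixDens G z) * h μ ∂G := by
    intro z h
    have hfm : Measurable fun μ : ℝ => (phi (z - μ) / mixDens G z).toNNReal :=
      ((phi_continuous.comp (continuous_const.sub continuous_id)).div_const
        _).measurable.real_toNNReal
    have : posterior G z
        = G.withDensity fun μ => ((phi (z - μ) / mixDens G z).toNNReal : ℝ≥0∞) := rfl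
    rw [this, integral_withDensity_eq_integral_smul hfm]
    congr 1
    funext μ
    have hnn : 0 ≤ phi (z - μ) / mixDens G z := by
      rw [hmix z]
      exact div_nonneg (phi_pos _).le (h0pos z).le
    rw [NNReal.smul_def, smul_eq_mul, Real.coe_toNNReal _ hnn]
  -- posterior moments
  have hdens_int : ∀ z : ℝ, Integrable (fun μ : ℝ => phi (z - μ) / mixDens G z) G := by
    intro z
    have := (hint 0 z).div_const (mixDens G z)
    simpa using this
  have hpost_prob : ∀ z : ℝ, IsProbabilityMeasure (posterior G z) := by
    intro z
    constructor
    rw [posterior, withDensity_apply _ MeasurableSet.univ, Measure.restrict_univ,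
      ← ofReal_integral_eq_lintegral_ofReal (hdens_int z)
        (Filter.Eventually.of_forall fun μ => by
          rw [hmix z]; exact div_nonneg (phi_pos _).le (h0pos z).le)]
    have : ∫ μ, phi (z - μ) / mixDens G z ∂G = 1 := by
      rw [integral_div]
      rw [show (∫ μ, phi (z - μ) ∂G) = mixDens G z from rfl]
      rw [hmix z]
      exact div_self (ne_of_gt (h0pos z))
    rw [this]
    simp
  have hmean : ∀ z : ℝ, ∫ x, x ∂(posterior G z) = mmt G 1 z / mmt G 0 z := by
    intro z
    rw [hpostint z (fun x => x)]
    have : (fun μ : ℝ => (phi (z - μ) / mixDens G z) * μ)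
        = fun μ : ℝ => (μ ^ 1 * phi (z - μ)) / mixDens G z := by
      funext μ; field_simp
    rw [this, integral_div, hmix z]
    rfl
  have hsq : ∀ z : ℝ, ∫ x, x ^ 2 ∂(posterior G z) = mmt G 2 z / mmt G 0 z := by
    intro z
    rw [hpostint z (fun x => x ^ 2)]
    have : (fun μ : ℝ => (phi (z - μ) / mixDens G z) * μ ^ 2)
        = fun μ : ℝ => (μ ^ 2 * phi (z - μ)) / mixDens G z := by
      funext μ; field_simp
    rw [this, integral_div, hmix z]
    rfl
  -- Memℒp of id w.r.t. posterior
  have hpost_ac : ∀ z : ℝ, posterior G z ≪ G := fun z =>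
    withDensity_absolutelyContinuous _ _
  have hmem : ∀ z : ℝ, MemLp id 2 (posterior G z) := by
    intro z
    have := hpost_prob z
    refine MemLp.of_bound aestronglyMeasurable_id M ?_
    have h0 : G {μ : ℝ | ¬ |μ| ≤ M} = 0 := by
      have : {μ : ℝ | ¬ |μ| ≤ M} = (Set.Icc (-M) M)ᶜ := by
        ext μ; simp [abs_le]
      rw [this]; exact hG
    have h1 : (posterior G z) {μ : ℝ | ¬ |μ| ≤ M} = 0 := hpost_ac z h0
    rw [ae_iff]
    convert h1 using 2
    ext; simp
  -- variance identity
  have hvar : ∀ z : ℝ,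
      (mmt G 2 z * mmt G 0 z - (mmt G 1 z) ^ 2) / (mmt G 0 z) ^ 2
        = ProbabilityTheory.variance id (posterior G z) := by
    intro z
    have := hpost_prob z
    rw [ProbabilityTheory.variance_eq_sub (hmem z)]
    have h1 : ∫ x, (id ^ 2) x ∂(posterior G z) = mmt G 2 z / mmt G 0 z := by
      simpa using hsq z
    have h2 : ∫ x, id x ∂(posterior G z) = mmt G 1 z / mmt G 0 z := by
      simpa using hmean z
    rw [h1, h2]
    have hm0 : (mmt G 0 z) ≠ 0 := ne_of_gt (h0pos z)
    field_simp
  refine ⟨fun z => ⟨hbayes z, hvar z, ?_⟩, ?_⟩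
  · rw [hvar z]
    exact ProbabilityTheory.variance_nonneg _ _
  · intro hnd
    have hpos : ∀ z : ℝ, 0 < (mmt G 2 z * mmt G 0 z - (mmt G 1 z) ^ 2) / (mmt G 0 z) ^ 2 := by
      intro z
      rcases lt_or_eq_of_le (by rw [hvar z]; exact ProbabilityTheory.variance_nonneg _ _ :
          (0:ℝ) ≤ (mmt G 2 z * mmt G 0 z - (mmt G 1 z) ^ 2) / (mmt G 0 z) ^ 2) with h | h
      · exact h
      exfalso
      -- variance zero ⟹ G is a Dirac mass
      have := hpost_prob z
      have hvz : ProbabilityTheory.variance id (posterior G z) = 0 := by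
        rw [← hvar z, ← h]
      have hev : ProbabilityTheory.evariance id (posterior G z) = 0 := by
        have hlt := (hmem z).evariance_lt_top
        have := ENNReal.toReal_eq_zero_iff (ProbabilityTheory.evariance id (posterior G z))
        rw [ProbabilityTheory.variance] at hvz
        rcases this.1 hvz with h' | h'
        · exact h'
        · exact absurd h' (ne_of_lt hlt)
      have hid : (id : ℝ → ℝ) =ᵐ[posterior G z]
          fun _ => ∫ x, id x ∂(posterior G z) :=
        (ProbabilityTheory.evariance_eq_zero_iff aemeasurable_id).1 hev
      set b : ℝ := ∫ x, id x ∂(posterior G z) with hb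
      have hpz : (posterior G z) {x : ℝ | x ≠ b} = 0 := by
        rw [← ae_iff] at *
        filter_upwards [hid] with x hx
        simpa using hx
      -- transfer to G
      have hfm : Measurable fun μ : ℝ => ENNReal.ofReal (phi (z - μ) / mixDens G z) :=
        ((phi_continuous.comp (continuous_const.sub continuous_id)).div_const
          _).measurable.ennreal_ofReal
      have hGz : G {x : ℝ | x ≠ b} = 0 := by
        have h' := (withDensity_apply_eq_zero hfm).1 hpz
        have hall : {x : ℝ | ENNReal.ofReal (phi (z - x) / mixDens G z) ≠ 0}
            = Set.univ := by
          ext x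
          simp only [Set.mem_setOf_eq, Set.mem_univ, iff_true, ne_eq]
          rw [ENNReal.ofReal_eq_zero, not_le, hmix z]
          exact div_pos (phi_pos _) (h0pos z)
        rwa [hall, Set.univ_inter] at h'
      -- G = dirac b
      apply hnd
      refine ⟨b, ?_⟩
      have hGb : G {b} = 1 := by
        have hcompl : ({b}ᶜ : Set ℝ) = {x : ℝ | x ≠ b} := by ext x; simp
        have := measure_compl (s := {b}) (measurableSet_singleton b) (measure_ne_top G _)
        rw [hGp.measure_univ, hcompl, hGz] at this
        have h1 : G {b} ≤ 1 := by
          rw [← hGp.measure_univ]; exact measure_mono (Set.subset_univ _)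
        exact le_antisymm h1 (tsub_eq_zero_iff_le.1 this.symm)
      ext s hs
      rw [Measure.dirac_apply' _ hs]
      by_cases hbs : b ∈ s
      · have h1 : G s ≤ 1 := by
          rw [← hGp.measure_univ]; exact measure_mono (Set.subset_univ _)
        have h2 : 1 ≤ G s := by
          rw [← hGb]; exact measure_mono (Set.singleton_subset_iff.2 hbs)
        rw [le_antisymm h1 h2]
        simp [Set.indicator_of_mem hbs]
      · have hsub : s ⊆ {x : ℝ | x ≠ b} := by
          intro x hx; simp only [Set.mem_setOf_eq]
          rintro rfl; exact hbs hx
        rw [measure_mono_null hsub hGz]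
        simp [Set.indicator_of_notMem hbs]
    refine ⟨hpos, ?_⟩
    apply strictMono_of_deriv_pos
    intro z
    rw [(hbayes z).deriv]
    exact hpos z
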